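/- arXiv:0902.0718 — 4 statements merged into one kernel-verified Lean document; each statement's English description precedes it below -/
import Mathlib

section
/- Let Z be a proper metric space with an isometric proper G-action, let z ∈ Z and suppose ε > 0 satisfies: for all g ∈ G, g·B(z,7ε) ∩ B(z,7ε) ≠ ∅ implies g ∈ G_z. Then the set G·cl(B(z,ε)) (the G-orbit of the closed ball of radius ε around z) is closed in Z. -/
theorem stmt2 {G Z : Type*} [Group G] [MetricSpace Z] [ProperSpace Z] [MulAction G Z]
    (hiso : ∀ g : G, Isometry fun z : Z => g • z)
    (hproper : ∀ z : Z, ∃ U : Set Z, IsOpen U ∧ z ∈ U ∧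
      {g : G | ((fun z : Z => g • z) '' U ∩ U).Nonempty}.Finite)
    (z : Z) (ε : ℝ) (hε : 0 < ε)
    (hsep : ∀ g : G,
      ((fun x : Z => g • x) '' Metric.ball z (7 * ε) ∩ Metric.ball z (7 * ε)).Nonempty →
        g ∈ MulAction.stabilizer G z) :
    IsClosed {x : Z | ∃ g : G, ∃ a ∈ Metric.closedBall z ε, x = g • a} := by
  have hdist : ∀ (g : G) (a b : Z), dist (g • a) (g • b) = dist a b :=
    fun g a b => (hiso g).dist_eq a b
  apply isClosed_of_closure_subset
  intro x hx
  rw [Metric.mem_closure_iff] at hx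
  obtain ⟨y, ⟨g₀, a₀, ha₀, hyeq⟩, hy⟩ := hx ε hε
  have hg₀ : dist x (g₀ • z) < 2 * ε := by
    have h1 : dist y (g₀ • z) ≤ ε := by
      rw [hyeq, hdist]
      exact Metric.mem_closedBall.mp ha₀
    calc dist x (g₀ • z) ≤ dist x y + dist y (g₀ • z) := dist_triangle _ _ _
      _ < ε + ε := by linarith
      _ = 2 * ε := by ring
  have hkey : ∀ h : G, dist x (h • z) < 2 * ε → h • z = g₀ • z := by
    intro h hh
    have hd : dist ((h⁻¹ * g₀) • z) z < 7 * ε := by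
      have : dist (h • ((h⁻¹ * g₀) • z)) (h • z) = dist ((h⁻¹ * g₀) • z) z := hdist h _ _
      rw [smul_smul, mul_inv_cancel_left] at this
      have h4 : dist (g₀ • z) (h • z) < 4 * ε := by
        calc dist (g₀ • z) (h • z) ≤ dist (g₀ • z) x + dist x (h • z) := dist_triangle _ _ _
          _ < 2 * ε + 2 * ε := by rw [dist_comm]; linarith
          _ = 4 * ε := by ring
      linarith [this ▸ h4]
    have hst := hsep (h⁻¹ * g₀) ⟨(h⁻¹ * g₀) • z,
      ⟨z, Metric.mem_ball_self (by linarith), rfl⟩, Metric.mem_ball.mpr hd⟩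
    have : (h⁻¹ * g₀) • z = z := hst
    calc h • z = h • ((h⁻¹ * g₀) • z) := by rw [this]
      _ = g₀ • z := by rw [smul_smul, mul_inv_cancel_left]
  have hle : dist x (g₀ • z) ≤ ε := by
    apply le_of_forall_pos_lt_add
    intro δ hδ
    obtain ⟨y', ⟨h, a, ha, hy'eq⟩, hy'⟩ := hx (min δ ε) (lt_min hδ hε)
    have hya : dist y' (h • z) ≤ ε := by
      rw [hy'eq, hdist]; exact Metric.mem_closedBall.mp ha
    have hxh : dist x (h • z) < 2 * ε := by
      calc dist x (h • z) ≤ dist x y' + dist y' (h • z) := dist_triangle _ _ _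
        _ < min δ ε + ε := by linarith
        _ ≤ 2 * ε := by have := min_le_right δ ε; linarith
    rw [← hkey h hxh]
    calc dist x (h • z) ≤ dist x y' + dist y' (h • z) := dist_triangle _ _ _
      _ < min δ ε + ε := by linarith
      _ ≤ ε + δ := by have := min_le_left δ ε; linarith
  refine ⟨g₀, g₀⁻¹ • x, ?_, (smul_inv_smul g₀ x).symm⟩
  rw [Metric.mem_closedBall]
  have : dist (g₀ • (g₀⁻¹ • x)) (g₀ • z) = dist (g₀⁻¹ • x) z := hdist g₀ _ _
  rw [smul_inv_smul] at this
  linarith [this ▸ hle]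
end

section
/- Let Z be a proper metric space with an isometric proper G-action, z ∈ Z, and ε > 0 such that g·B(z,7ε) ∩ B(z,7ε) ≠ ∅ implies g ∈ G_z for all g ∈ G. Choose a set-theoretic section s : G/G_z → G of the projection. Then the map G/G_z × B(z,7ε) → G·B(z,7ε), (gG_z, x) ↦ s(gG_z)·x, is a homeomorphism. -/
/-!
As `G ⧸ G_z` is discrete, near `(c, x)` the map `(c, x) ↦ s c • x` is the homeomorphism
`x ↦ s c • x` of `Z`, so it is continuous and open. The separation hypothesis makes it injective,
and since `G_z` preserves the ball `B(z, 7ε)`, its image is all of `G • B(z, 7ε)`.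
-/

open Filter Topology Pointwise Set Function

section ProdSmul

variable {ι G Z : Type*} [TopologicalSpace ι] [DiscreteTopology ι] [Group G]
  [TopologicalSpace Z] [MulAction G Z] [ContinuousConstSMul G Z]

theorem map_nhds_prod_smul (s : ι → G) (p : ι × Z) :
    map (fun q : ι × Z => s q.1 • q.2) (𝓝 p) = 𝓝 (s p.1 • p.2) := by
  rw [nhds_prod_eq, nhds_discrete, pure_prod, map_map]
  exact (Homeomorph.smul (s p.1)).map_nhds_eq p.2

theorem isOpenEmbedding_prod_smul_of_injective {B : Set Z} (hB : IsOpen B) (s : ι → G)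
    (hinj : Injective fun p : ι × B => s p.1 • (p.2 : Z)) :
    IsOpenEmbedding fun p : ι × B => s p.1 • (p.2 : Z) := by
  have hval : IsOpenEmbedding (Prod.map id Subtype.val : ι × B → ι × Z) :=
    IsOpenEmbedding.id.prodMap hB.isOpenEmbedding_subtypeVal
  refine .of_continuous_injective_isOpenMap ?_ hinj ?_
  · refine Continuous.comp (g := fun q : ι × Z => s q.1 • q.2) ?_ hval.continuous
    exact continuous_iff_continuousAt.2 fun p => (map_nhds_prod_smul s p).le
  · refine IsOpenMap.comp (g := fun q : ι × Z => s q.1 • q.2) ?_ hval.isOpenMap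
    exact .of_nhds_le fun p => (map_nhds_prod_smul s p).ge

end ProdSmul

section QuotientSection

variable {G Z : Type*} [Group G] [MulAction G Z] {H : Subgroup G} {B : Set Z}
  {s : G ⧸ H → G}

theorem injective_section_smul (hs : ∀ c : G ⧸ H, (s c : G ⧸ H) = c)
    (hsep : ∀ g : G, (g • B ∩ B).Nonempty → g ∈ H) :
    Injective fun p : (G ⧸ H) × B => s p.1 • (p.2 : Z) := by
  rintro ⟨c, x⟩ ⟨c', x'⟩ h
  have h' : s c • (x : Z) = s c' • (x' : Z) := h
  have hH : (s c')⁻¹ * s c ∈ H := by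
    refine hsep _ ⟨x', ⟨x, x.2, ?_⟩, x'.2⟩
    change ((s c')⁻¹ * s c) • (x : Z) = x'
    rw [mul_smul, h', inv_smul_smul]
  obtain rfl : c = c' := by
    rw [← hs c, ← hs c']
    exact (QuotientGroup.eq.2 hH).symm
  exact Prod.ext rfl (Subtype.ext (smul_left_cancel _ h'))

theorem range_section_smul (hs : ∀ c : G ⧸ H, (s c : G ⧸ H) = c)
    (hinv : ∀ h ∈ H, MapsTo (h • ·) B B) :
    range (fun p : (G ⧸ H) × B => s p.1 • (p.2 : Z)) = {x | ∃ g : G, ∃ a ∈ B, x = g • a} := by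
  refine Subset.antisymm (range_subset_iff.2 fun p => ⟨_, _, p.2.2, rfl⟩) ?_
  rintro - ⟨g, a, ha, rfl⟩
  have hH : (s g)⁻¹ * g ∈ H := QuotientGroup.eq.1 (hs g)
  refine ⟨(g, ⟨((s g)⁻¹ * g) • a, hinv _ hH ha⟩), ?_⟩
  simp only [smul_smul, mul_inv_cancel_left]

theorem exists_homeomorph_quotient_prod [TopologicalSpace Z] [ContinuousConstSMul G Z]
    [TopologicalSpace (G ⧸ H)] [DiscreteTopology (G ⧸ H)] (hB : IsOpen B)
    (hs : ∀ c : G ⧸ H, (s c : G ⧸ H) = c)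
    (hsep : ∀ g : G, (g • B ∩ B).Nonempty → g ∈ H) (hinv : ∀ h ∈ H, MapsTo (h • ·) B B) :
    ∃ e : (G ⧸ H) × B ≃ₜ {x : Z | ∃ g : G, ∃ a ∈ B, x = g • a},
      ∀ p : (G ⧸ H) × B, (e p : Z) = s p.1 • (p.2 : Z) :=
  ⟨(isOpenEmbedding_prod_smul_of_injective hB s (injective_section_smul hs hsep)).isEmbedding
    |>.toHomeomorph.trans (.setCongr (range_section_smul hs hinv)), fun _ => rfl⟩

end QuotientSection

theorem stmt3_general {G Z : Type*} [Group G] [MetricSpace Z] [MulAction G Z]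
    (z : Z)
    [TopologicalSpace (G ⧸ MulAction.stabilizer G z)]
    [DiscreteTopology (G ⧸ MulAction.stabilizer G z)]
    (hiso : ∀ g : G, Isometry fun x : Z => g • x)
    (ε : ℝ)
    (hsep : ∀ g : G,
      ((fun x : Z => g • x) '' Metric.ball z (7 * ε) ∩ Metric.ball z (7 * ε)).Nonempty →
        g ∈ MulAction.stabilizer G z)
    (s : G ⧸ MulAction.stabilizer G z → G)
    (hs : ∀ c : G ⧸ MulAction.stabilizer G z, (s c : G ⧸ MulAction.stabilizer G z) = c) :
    ∃ e : (G ⧸ MulAction.stabilizer G z) × (Metric.ball z (7 * ε) : Set Z) ≃ₜ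
        ({x : Z | ∃ g : G, ∃ a ∈ Metric.ball z (7 * ε), x = g • a} : Set Z),
      ∀ p : (G ⧸ MulAction.stabilizer G z) × (Metric.ball z (7 * ε) : Set Z),
        (e p : Z) = s p.1 • (p.2 : Z) := by
  have : ContinuousConstSMul G Z := ⟨fun g => (hiso g).continuous⟩
  refine exists_homeomorph_quotient_prod Metric.isOpen_ball hs hsep fun h hh => ?_
  simpa only [show h • z = z from hh] using (hiso h).mapsTo_ball z (7 * ε)

theorem stmt3 {G Z : Type*} [Group G] [MetricSpace Z] [ProperSpace Z] [MulAction G Z]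
    (z : Z)
    [TopologicalSpace (G ⧸ MulAction.stabilizer G z)]
    [DiscreteTopology (G ⧸ MulAction.stabilizer G z)]
    (hiso : ∀ g : G, Isometry fun x : Z => g • x)
    (hproper : ∀ w : Z, ∃ U : Set Z, IsOpen U ∧ w ∈ U ∧
      {g : G | ((fun x : Z => g • x) '' U ∩ U).Nonempty}.Finite)
    (ε : ℝ) (hε : 0 < ε)
    (hsep : ∀ g : G,
      ((fun x : Z => g • x) '' Metric.ball z (7 * ε) ∩ Metric.ball z (7 * ε)).Nonempty →
        g ∈ MulAction.stabilizer G z)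
    (s : G ⧸ MulAction.stabilizer G z → G)
    (hs : ∀ c : G ⧸ MulAction.stabilizer G z, (s c : G ⧸ MulAction.stabilizer G z) = c) :
    ∃ e : (G ⧸ MulAction.stabilizer G z) × (Metric.ball z (7 * ε) : Set Z) ≃ₜ
        ({x : Z | ∃ g : G, ∃ a ∈ Metric.ball z (7 * ε), x = g • a} : Set Z),
      ∀ p : (G ⧸ MulAction.stabilizer G z) × (Metric.ball z (7 * ε) : Set Z),
        (e p : Z) = s p.1 • (p.2 : Z) :=
  stmt3_general z hiso ε hsep s hs
end

section
/- Let K be a compact metric space with an action of a finite group H by homeomorphisms, and suppose K is separable. Then the topological dimension of the orbit space H\K is at most the topological dimension of K. -/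
/-- `DimLE X n`: every open cover of `X` has an open refinement covering `X`
in which no `n+2` distinct sets have a common point (covering dimension ≤ n). -/
def DimLE (X : Type*) [TopologicalSpace X] (n : ℕ) : Prop :=
  ∀ U : Set (Set X), (∀ u ∈ U, IsOpen u) → ⋃₀ U = Set.univ →
    ∃ V : Set (Set X), (∀ v ∈ V, IsOpen v) ∧ ⋃₀ V = Set.univ ∧
      (∀ v ∈ V, ∃ u ∈ U, v ⊆ u) ∧
      ∀ s : Finset (Set X), ↑s ⊆ V → (⋂₀ (s : Set (Set X))).Nonempty → s.card ≤ n + 1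

/-- Lebesgue covering dimension, as an element of `ℕ∞` (⊤ if no bound exists). -/
noncomputable def covDim (X : Type*) [TopologicalSpace X] : ℕ∞ :=
  sInf {n : ℕ∞ | ∃ d : ℕ, n = (d : ℕ∞) ∧ DimLE X d}


/-!
Induction on `|G|`. The fixed-point set `F` of `X` maps homeomorphically onto its image in
`G\X`. A point `x ∉ F` has a closed *slice* `C`: a neighbourhood of `x` invariant under the
stabilizer `Gₓ` and disjoint from `g • C` for `g ∉ Gₓ`; then the image of `C` in `G\X` is
homeomorphic to `Gₓ\C`, of dimension `≤ n` by induction since `Gₓ` is a proper subgroup.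
Countably many slices cover `X \ F`, so `G\X` is a countable union of closed subsets of dimension
`≤ n`, and the countable closed sum theorem for compact Hausdorff spaces applies. The sum theorem
is proved by shrinking a finite open cover successively, at step `k` so as to have order `≤ n` on
`A k`, with each shrinking having closure inside the previous one; compactness makes the process
stop after finitely many steps.
-/

open Set Topology MulAction

section CoveringDimension

variable {X Y : Type*} [TopologicalSpace X] [TopologicalSpace Y] {n : ℕ}

def CoverOrderLE {ι : Type*} (W : ι → Set X) (S : Set X) (n : ℕ) : Prop :=
  ∀ x ∈ S, ∀ s : Finset ι, (∀ i ∈ s, x ∈ W i) → s.card ≤ n + 1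

theorem DimLE.exists_shrinking (h : DimLE X n) {ι : Type*} {U : ι → Set X}
    (hUo : ∀ i, IsOpen (U i)) (hUc : ⋃ i, U i = univ) :
    ∃ W : ι → Set X, (∀ i, IsOpen (W i)) ∧ ⋃ i, W i = univ ∧ (∀ i, W i ⊆ U i) ∧
      CoverOrderLE W univ n := by
  classical
  obtain ⟨V, hVo, hVc, hVU, hVord⟩ :=
    h (range U) (forall_mem_range.2 hUo) (by rwa [sUnion_range])
  have hφ : ∀ v ∈ V, ∃ i, v ⊆ U i := fun v hv => by
    obtain ⟨_, ⟨i, rfl⟩, hvi⟩ := hVU v hv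
    exact ⟨i, hvi⟩
  choose φ hφU using hφ
  refine ⟨fun i => ⋃ (v) (hv : v ∈ V) (_ : φ v hv = i), v,
    fun i => isOpen_iUnion fun v => isOpen_iUnion fun hv => isOpen_iUnion fun _ => hVo v hv,
    ?_, ?_, ?_⟩
  · refine eq_univ_of_forall fun x => ?_
    obtain ⟨v, hv, hxv⟩ := hVc ▸ mem_univ x
    exact mem_iUnion.2 ⟨φ v hv, mem_iUnion₂.2 ⟨v, hv, mem_iUnion.2 ⟨rfl, hxv⟩⟩⟩
  · intro i x hx
    simp only [mem_iUnion] at hx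
    obtain ⟨v, hv, rfl, hxv⟩ := hx
    exact hφU v hv hxv
  · intro x _ s hs
    have hmem : ∀ i ∈ s, ∃ v, ∃ hv : v ∈ V, φ v hv = i ∧ x ∈ v := fun i hi => by
      simpa only [mem_iUnion, exists_prop] using hs i hi
    choose! v hvV hφv hxv using hmem
    have hinj : InjOn v s := fun i hi j hj hij => by
      rw [← hφv i hi, ← hφv j hj]
      simp only [hij]
    rw [← Finset.card_image_of_injOn hinj]
    refine hVord _ (fun w hw => ?_) ⟨x, fun w hw => ?_⟩ <;>
      obtain ⟨i, hi, rfl⟩ := Finset.mem_image.1 hw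
    exacts [hvV i hi, hxv i hi]

theorem dimLE_of_forall_fin_shrinking [CompactSpace X]
    (h : ∀ (m : ℕ) (U : Fin m → Set X), (∀ i, IsOpen (U i)) → ⋃ i, U i = univ →
      ∃ W : Fin m → Set X, (∀ i, IsOpen (W i)) ∧ ⋃ i, W i = univ ∧ (∀ i, W i ⊆ U i) ∧
        CoverOrderLE W univ n) :
    DimLE X n := by
  classical
  intro 𝒰 h𝒰o h𝒰c
  obtain ⟨t, ht⟩ := isCompact_univ.elim_finite_subcover (fun u : 𝒰 => (u : Set X))
    (fun u => h𝒰o u u.2) (by rw [← sUnion_eq_iUnion, h𝒰c])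
  let U : Fin t.card → Set X := fun j => (t.equivFin.symm j : 𝒰)
  have hUc : ⋃ j, U j = univ := by
    refine eq_univ_of_forall fun x => ?_
    obtain ⟨u, hu, hxu⟩ := mem_iUnion₂.1 (ht (mem_univ x))
    exact mem_iUnion.2 ⟨t.equivFin ⟨u, hu⟩, by simpa [U] using hxu⟩
  obtain ⟨W, hWo, hWc, hWU, hWord⟩ := h _ U (fun j => h𝒰o _ (t.equivFin.symm j : 𝒰).2) hUc
  refine ⟨range W, forall_mem_range.2 hWo, by rwa [sUnion_range], forall_mem_range.2 fun j =>
    ⟨_, (t.equivFin.symm j : 𝒰).2, hWU j⟩, fun s hs ⟨x, hx⟩ => ?_⟩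
  calc s.card ≤ ((Finset.univ.filter fun j => W j ∈ s).image W).card :=
        Finset.card_le_card fun w hw => by
          obtain ⟨j, rfl⟩ := hs hw
          exact Finset.mem_image_of_mem W (by simpa using hw)
    _ ≤ (Finset.univ.filter fun j => W j ∈ s).card := Finset.card_image_le
    _ ≤ n + 1 := hWord x trivial _ fun j hj => hx _ (Finset.mem_filter.1 hj).2

theorem DimLE.of_isClosedEmbedding [CompactSpace X] {f : X → Y} (hf : IsClosedEmbedding f)
    (h : DimLE Y n) : DimLE X n := by
  refine dimLE_of_forall_fin_shrinking fun m U hUo hUc => ?_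
  rcases isEmpty_or_nonempty (Fin m) with hm | ⟨⟨i₀⟩⟩
  · exact ⟨U, hUo, hUc, fun _ => subset_rfl, fun _ _ s _ => by simp [s.eq_empty_of_isEmpty]⟩
  choose E hEo hEU using fun i => hf.isInducing.isOpen_iff.1 (hUo i)
  have hEc : ⋃ i, (E i ∪ (range f)ᶜ) = univ := by
    refine eq_univ_of_forall fun y => ?_
    by_cases hy : y ∈ range f
    · obtain ⟨x, rfl⟩ := hy
      obtain ⟨i, hi⟩ := mem_iUnion.1 (hUc ▸ mem_univ x)
      exact mem_iUnion.2 ⟨i, Or.inl (by rwa [← hEU i] at hi)⟩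
    · exact mem_iUnion.2 ⟨i₀, Or.inr hy⟩
  obtain ⟨W, hWo, hWc, hWE, hWord⟩ := h.exists_shrinking
    (fun i => (hEo i).union hf.isClosed_range.isOpen_compl) hEc
  refine ⟨fun i => f ⁻¹' W i, fun i => (hWo i).preimage hf.continuous,
    by rw [← preimage_iUnion, hWc, preimage_univ], fun i x hx => ?_,
    fun x _ s hs => hWord (f x) trivial s hs⟩
  rw [← hEU i]
  exact (hWE i hx).resolve_right (not_not.2 (mem_range_self x))

theorem DimLE.range [CompactSpace X] [T2Space Y] {f : X → Y} (hf : Continuous f)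
    (hinj : Function.Injective f) (h : DimLE X n) : DimLE (range f) n :=
  have : CompactSpace (Set.range f) := isCompact_iff_compactSpace.1 (isCompact_range hf)
  h.of_isClosedEmbedding (hf.isClosedEmbedding hinj).isEmbedding.toHomeomorph.symm.isClosedEmbedding

theorem DimLE.exists_shrinking_of_isClosed {A : Set X} (hA : IsClosed A) (h : DimLE A n)
    {ι : Type*} {U : ι → Set X} (hUo : ∀ i, IsOpen (U i)) (hUc : ⋃ i, U i = univ) :
    ∃ W : ι → Set X, (∀ i, IsOpen (W i)) ∧ ⋃ i, W i = univ ∧ (∀ i, W i ⊆ U i) ∧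
      CoverOrderLE W A n := by
  obtain ⟨WA, hWAo, hWAc, hWAU, hWAord⟩ := h.exists_shrinking
    (fun i => (hUo i).preimage continuous_subtype_val)
    (by rw [← preimage_iUnion, hUc, preimage_univ])
  choose E hEo hEW using fun i => isOpen_induced_iff.1 (hWAo i)
  -- off `A` nothing changes, on `A` we use the shrinking of the trace cover
  refine ⟨fun i => E i ∩ U i ∪ U i \ A, fun i => ((hEo i).inter (hUo i)).union
    ((hUo i).sdiff hA), eq_univ_of_forall fun x => ?_, fun i x hx => ?_, ?_⟩
  · by_cases hx : x ∈ A
    · obtain ⟨i, hi⟩ := mem_iUnion.1 (hWAc ▸ mem_univ (⟨x, hx⟩ : A))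
      exact mem_iUnion.2 ⟨i, Or.inl ⟨by rwa [← hEW i] at hi, hWAU i hi⟩⟩
    · obtain ⟨i, hi⟩ := mem_iUnion.1 (hUc ▸ mem_univ x)
      exact mem_iUnion.2 ⟨i, Or.inr ⟨hi, hx⟩⟩
  · rcases hx with ⟨-, hx⟩ | ⟨hx, -⟩ <;> exact hx
  · intro x hx s hs
    refine hWAord ⟨x, hx⟩ trivial s fun i hi => ?_
    rcases hs i hi with ⟨hxE, -⟩ | ⟨-, hxA⟩
    · rwa [← hEW i]
    · exact absurd hx hxA

theorem exists_nested_shrinkings [NormalSpace X] {A : ℕ → Set X} (hA : ∀ k, IsClosed (A k))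
    (hdim : ∀ k, DimLE (A k) n) {ι : Type*} [Finite ι] {U : ι → Set X}
    (hUo : ∀ i, IsOpen (U i)) (hUc : ⋃ i, U i = univ) :
    ∃ W : ℕ → ι → Set X, W 0 = U ∧ (∀ k i, IsOpen (W k i)) ∧ (∀ k, ⋃ i, W k i = univ) ∧
      (∀ k i, closure (W (k + 1) i) ⊆ W k i) ∧ ∀ k, CoverOrderLE (W (k + 1)) (A k) n := by
  have step : ∀ k (V : ι → Set X), (∀ i, IsOpen (V i)) → ⋃ i, V i = univ →
      ∃ V' : ι → Set X, (∀ i, IsOpen (V' i)) ∧ ⋃ i, V' i = univ ∧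
        (∀ i, closure (V' i) ⊆ V i) ∧ CoverOrderLE V' (A k) n := by
    intro k V hVo hVc
    obtain ⟨V₁, hV₁c, hV₁o, hV₁V⟩ :=
      exists_iUnion_eq_closure_subset hVo (fun _ => toFinite _) hVc
    obtain ⟨V', hV'o, hV'c, hV'V₁, hV'ord⟩ :=
      (hdim k).exists_shrinking_of_isClosed (hA k) hV₁o hV₁c
    exact ⟨V', hV'o, hV'c, fun i => (closure_mono (hV'V₁ i)).trans (hV₁V i), hV'ord⟩
  choose! next hnext_open hnext_cover hnext_closure hnext_order using step
  let W : ℕ → ι → Set X := fun k => Nat.rec U (fun k V => next k V) k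
  have hW : ∀ k, (∀ i, IsOpen (W k i)) ∧ ⋃ i, W k i = univ := by
    intro k
    induction k with
    | zero => exact ⟨hUo, hUc⟩
    | succ k ih => exact ⟨hnext_open k _ ih.1 ih.2, hnext_cover k _ ih.1 ih.2⟩
  exact ⟨W, rfl, fun k => (hW k).1, fun k => (hW k).2,
    fun k => hnext_closure k _ (hW k).1 (hW k).2, fun k => hnext_order k _ (hW k).1 (hW k).2⟩

theorem dimLE_of_countable_closed_cover [CompactSpace X] [T2Space X] {𝒜 : Set (Set X)}
    (h𝒜 : 𝒜.Countable) (hclosed : ∀ A ∈ 𝒜, IsClosed A) (hcover : ⋃₀ 𝒜 = univ)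
    (hdim : ∀ A ∈ 𝒜, DimLE A n) : DimLE X n := by
  refine dimLE_of_forall_fin_shrinking fun m U hUo hUc => ?_
  rcases 𝒜.eq_empty_or_nonempty with rfl | h𝒜ne
  · have : IsEmpty X := by simpa [eq_comm (a := ∅)] using hcover
    exact ⟨U, hUo, hUc, fun _ => subset_rfl, fun x => isEmptyElim x⟩
  obtain ⟨A, rfl⟩ := h𝒜.exists_eq_range h𝒜ne
  obtain ⟨W, rfl, hWo, hWc, hWcl, hWord⟩ := exists_nested_shrinkings
    (fun k => hclosed _ (mem_range_self k)) (fun k => hdim _ (mem_range_self k)) hUo hUc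
  -- closed sets squeezed between the high-order loci of `W (k + 1)` and of `W k`; they have
  -- empty intersection because every point lies in some `A k`
  let B : ℕ → Set X := fun k =>
    ⋃ (s : Finset (Fin m)) (_ : s.card = n + 2), ⋂ i ∈ s, closure (W (k + 1) i)
  have hB_closed : ∀ k, IsClosed (B k) := fun k => isClosed_iUnion_of_finite fun s =>
    isClosed_iUnion_of_finite fun _ => isClosed_biInter fun i _ => isClosed_closure
  have hB_anti : ∀ k, B (k + 1) ⊆ B k := fun k =>
    iUnion₂_mono fun s _ => iInter₂_mono fun i _ => (hWcl (k + 1) i).trans subset_closure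
  obtain ⟨K, hK⟩ : ∃ K, B K = ∅ := by
    by_contra! hne
    obtain ⟨x, hx⟩ := IsCompact.nonempty_iInter_of_sequence_nonempty_isCompact_isClosed B
      hB_anti hne (hB_closed 0).isCompact hB_closed
    obtain ⟨k, hxA⟩ := mem_iUnion.1 (by rw [← sUnion_range, hcover]; trivial : x ∈ ⋃ k, A k)
    obtain ⟨s, hs, hxs⟩ := mem_iUnion₂.1 (mem_iInter.1 hx (k + 1))
    have := hWord k x hxA s fun i hi => hWcl (k + 1) i (mem_iInter₂.1 hxs i hi)
    omega
  have hW_anti : ∀ i, Antitone fun k => W k i := fun i =>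
    antitone_nat_of_succ_le fun k => subset_closure.trans (hWcl k i)
  refine ⟨W (K + 1), hWo _, hWc _, fun i => hW_anti i (Nat.zero_le _), fun x _ s hs => ?_⟩
  by_contra! hcard
  obtain ⟨s', hs's, hs'⟩ := Finset.exists_subset_card_eq (show n + 2 ≤ s.card by omega)
  have hxB : x ∈ B K :=
    mem_iUnion₂.2 ⟨s', hs', mem_iInter₂.2 fun i hi => subset_closure (hs i (hs's hi))⟩
  simp [hK] at hxB

end CoveringDimension

section Quotient

variable {G X : Type*} [Group G] [MulAction G X] [TopologicalSpace X] {n : ℕ}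

instance Subgroup.continuousConstSMul [ContinuousConstSMul G X] (S : Subgroup G) :
    ContinuousConstSMul S X :=
  ⟨fun s => continuous_const_smul (s : G)⟩

instance SubMulAction.continuousConstSMul {R M : Type*} [SMul R M] [TopologicalSpace M]
    [ContinuousConstSMul R M] (p : SubMulAction R M) : ContinuousConstSMul R p :=
  ⟨fun r => ((continuous_const_smul r).comp continuous_subtype_val).subtype_mk _⟩

omit [TopologicalSpace X] in
theorem MulAction.quotient_mk_eq_iff {x y : X} :
    Quotient.mk (orbitRel G X) x = Quotient.mk _ y ↔ ∃ g : G, g • y = x := by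
  rw [Quotient.eq, orbitRel_apply, mem_orbit_iff]

theorem MulAction.isClosed_fixedPoints [ContinuousConstSMul G X] [T2Space X] :
    IsClosed (fixedPoints G X) := by
  simp only [fixedPoints, ofPred_forall]
  exact isClosed_iInter fun g => isClosed_eq (continuous_const_smul g) continuous_id

theorem exists_slice [ContinuousConstSMul G X] [Finite G] [T2Space X] [LocallyCompactSpace X]
    (x : X) : ∃ C ∈ 𝓝 x, IsClosed C ∧ (∀ g ∈ stabilizer G x, ∀ c ∈ C, g • c ∈ C) ∧
      ∀ g ∉ stabilizer G x, ∀ c ∈ C, g • c ∉ C := by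
  obtain ⟨U, hU, hUdisj⟩ := ProperlyDiscontinuousSMul.exists_nhds_disjoint_image G x
  obtain ⟨C₀, hC₀, hC₀c, hC₀U⟩ := exists_mem_nhds_isClosed_subset hU
  let C := ⋂ s : stabilizer G x, ((s : G) • ·) ⁻¹' C₀
  have hCU : C ⊆ U := fun c hc => hC₀U (by simpa using mem_iInter.1 hc 1)
  refine ⟨C, Filter.iInter_mem.2 fun s => ?_,
    isClosed_iInter fun s => hC₀c.preimage (continuous_const_smul _), ?_, ?_⟩
  · refine (continuous_const_smul (s : G)).continuousAt.preimage_mem_nhds ?_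
    rwa [show (s : G) • x = x from s.2]
  · intro g hg c hc
    simp only [C, mem_iInter, mem_preimage] at hc ⊢
    intro s
    simpa [mul_smul] using hc (s * ⟨g, hg⟩)
  · intro g hg c hc hgc
    exact disjoint_left.1 (hUdisj g hg) (mem_image_of_mem _ (hCU hc)) (hCU hgc)

theorem DimLE.image_quotient_fixedPoints [ContinuousConstSMul G X] [CompactSpace X] [T2Space X]
    [T2Space (Quotient (orbitRel G X))] (h : DimLE X n) :
    DimLE (Quotient.mk (orbitRel G X) '' fixedPoints G X) n := by
  have hF := isClosed_fixedPoints (G := G) (X := X)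
  have : CompactSpace (fixedPoints G X) := isCompact_iff_compactSpace.1 hF.isCompact
  rw [image_eq_range]
  refine (h.of_isClosedEmbedding hF.isClosedEmbedding_subtypeVal).range
    (continuous_quot_mk.comp continuous_subtype_val) fun a b hab => Subtype.ext ?_
  obtain ⟨g, hg⟩ := quotient_mk_eq_iff.1 hab
  rw [← hg, b.2 g]

theorem DimLE.image_quotient_of_slice [CompactSpace X] [T2Space (Quotient (orbitRel G X))]
    {S : Subgroup G} (p : SubMulAction S X) (hp : IsClosed (p : Set X))
    (hdisj : ∀ g ∉ S, ∀ c ∈ p, g • c ∉ p) (h : DimLE (Quotient (orbitRel S p)) n) :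
    DimLE (Quotient.mk (orbitRel G X) '' p) n := by
  have : CompactSpace p := isCompact_iff_compactSpace.1 hp.isCompact
  let φ : Quotient (orbitRel S p) → Quotient (orbitRel G X) :=
    Quotient.lift (fun c : p => Quotient.mk _ (c : X)) fun a b hab => by
      obtain ⟨s, rfl⟩ := mem_orbit_iff.1 (orbitRel_apply.1 hab)
      exact quotient_mk_eq_iff.2 ⟨s, rfl⟩
  have hinj : Function.Injective φ := by
    rintro ⟨a⟩ ⟨b⟩ hab
    obtain ⟨g, hg⟩ := quotient_mk_eq_iff.1 hab
    have hgS : g ∈ S := by_contra fun hgS => hdisj g hgS b b.2 (hg ▸ a.2)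
    exact Quotient.sound (mem_orbit_iff.2 ⟨⟨g, hgS⟩, Subtype.ext hg⟩)
  have hrange : Set.range φ = Quotient.mk (orbitRel G X) '' p := by
    rw [← (Quotient.mk_surjective (s := orbitRel S p)).range_comp φ, image_eq_range]
    rfl
  rw [← hrange]
  exact h.range (f := φ)
    (continuous_quot_lift _ (continuous_quot_mk.comp continuous_subtype_val)) hinj

theorem DimLE.quotient [Finite G] [ContinuousConstSMul G X] [CompactSpace X] [T2Space X]
    [SecondCountableTopology X] (h : DimLE X n) : DimLE (Quotient (orbitRel G X)) n := by
  induction hN : Nat.card G using Nat.strong_induction_on generalizing G X with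
  | _ N ih =>
  set q := Quotient.mk (orbitRel G X)
  have hslice : ∀ x ∉ fixedPoints G X, ∃ C ∈ 𝓝 x, IsClosed C ∧ DimLE (q '' C) n := by
    intro x hx
    obtain ⟨C, hCx, hC, hinv, hdisj⟩ := exists_slice (G := G) x
    let p : SubMulAction (stabilizer G x) X := ⟨C, fun s c hc => hinv s s.2 c hc⟩
    have : CompactSpace p := isCompact_iff_compactSpace.1 hC.isCompact
    have : SecondCountableTopology p := inferInstanceAs (SecondCountableTopology C)
    obtain ⟨g, hg⟩ : ∃ g : G, g • x ≠ x := by simpa [fixedPoints] using hx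
    have hcard : Nat.card (stabilizer G x) < N :=
      hN ▸ Finite.card_subtype_lt (p := (· ∈ stabilizer G x)) hg
    exact ⟨C, hCx, hC, DimLE.image_quotient_of_slice p hC hdisj
      (ih _ hcard (h.of_isClosedEmbedding hC.isClosedEmbedding_subtypeVal) rfl)⟩
  choose! C hCx hC hCdim using hslice
  obtain ⟨t, htF, htc, hcover⟩ :=
    TopologicalSpace.countable_cover_nhdsWithin (s := (fixedPoints G X)ᶜ) fun x hx =>
      mem_nhdsWithin_of_mem_nhds (hCx x hx)
  have hq_closed : ∀ {A : Set X}, IsClosed A → IsClosed (q '' A) := fun hA =>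
    (hA.isCompact.image continuous_quotient_mk').isClosed
  refine dimLE_of_countable_closed_cover
    ((htc.image fun x => q '' C x).insert (q '' fixedPoints G X)) ?_ ?_ ?_
  · rintro A (rfl | ⟨x, hx, rfl⟩)
    exacts [hq_closed isClosed_fixedPoints, hq_closed (hC x (htF hx))]
  · refine eq_univ_of_forall fun y => ?_
    obtain ⟨x, rfl⟩ := Quotient.mk_surjective y
    by_cases hx : x ∈ fixedPoints G X
    · exact ⟨_, mem_insert _ _, mem_image_of_mem q hx⟩
    · obtain ⟨z, hz, hxz⟩ := mem_iUnion₂.1 (hcover hx)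
      exact ⟨_, mem_insert_of_mem _ (mem_image_of_mem _ hz), mem_image_of_mem q hxz⟩
  · rintro A (rfl | ⟨x, hx, rfl⟩)
    exacts [h.image_quotient_fixedPoints, hCdim x (htF hx)]

end Quotient

theorem stmt4_general {H K : Type*} [Group H] [Finite H] [MetricSpace K] [CompactSpace K]
    [MulAction H K]
    (hcont : ∀ h : H, Continuous fun x : K => h • x) :
    covDim (Quotient (MulAction.orbitRel H K)) ≤ covDim K := by
  have : ContinuousConstSMul H K := ⟨hcont⟩
  exact sInf_le_sInf fun _ ⟨d, hd, hdim⟩ => ⟨d, hd, hdim.quotient⟩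

theorem stmt4 {H K : Type*} [Group H] [Finite H] [MetricSpace K] [CompactSpace K]
    [TopologicalSpace.SeparableSpace K] [MulAction H K]
    (hcont : ∀ h : H, Continuous fun x : K => h • x) :
    covDim (Quotient (MulAction.orbitRel H K)) ≤ covDim K :=
  stmt4_general hcont
end

section
/- Suppose G satisfies Condition (C): for all g, h ∈ G with h of infinite order and integers k, l, g h^k g^{-1} = h^l implies |k| = |l|. Let C ≤ G be infinite cyclic. Then N_G[C] = ⋃_{k≥1} N_G(k!C), where N_G[C] = {g ∈ G | gCg^{-1} ∩ C is infinite}, and k!C = {h^{k!} | h ∈ C}. -/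
/-- Condition (C). -/
def ConditionC (G : Type*) [Group G] : Prop :=
  ∀ g h : G, (∀ n : ℤ, n ≠ 0 → h ^ n ≠ 1) →
    ∀ k l : ℤ, g * h ^ k * g⁻¹ = h ^ l → |k| = |l|

/-- A subgroup is infinite cyclic if it is generated by an element of infinite order. -/
def IsInfiniteCyclic {G : Type*} [Group G] (C : Subgroup G) : Prop :=
  ∃ g : G, (∀ n : ℤ, n ≠ 0 → g ^ n ≠ 1) ∧ C = Subgroup.zpowers g

/-- The subgroup `k!C = {h^{k!} | h ∈ C}` of a subgroup `C` (as generated set). -/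
def factPow {G : Type*} [Group G] (C : Subgroup G) (k : ℕ) : Subgroup G :=
  Subgroup.closure {x : G | ∃ h ∈ C, x = h ^ Nat.factorial k}

/-!
If `g c^m g⁻¹ = c^k` with `m ≠ 0`, Condition (C) forces `k = ±m`, so conjugation by `g` maps
`c^m` to `(c^m)^{±1}` and hence every power of `c^m`, in particular `c^{|m|!}`, to itself or
its inverse. Conversely, if `g` normalizes the infinite subgroup `⟨c^{k!}⟩ ≤ C`, that subgroup
lies in `gCg⁻¹ ∩ C`.
-/

open Subgroup

section

variable {G : Type*} [Group G]

lemma factPow_zpowers (c : G) (k : ℕ) :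
    factPow (zpowers c) k = zpowers (c ^ k.factorial) := by
  apply le_antisymm
  · refine (closure_le _).mpr ?_
    rintro x ⟨h, hh, rfl⟩
    obtain ⟨n, rfl⟩ := mem_zpowers_iff.mp hh
    refine mem_zpowers_iff.mpr ⟨n, ?_⟩
    rw [← zpow_natCast, ← zpow_natCast, ← zpow_mul, ← zpow_mul, mul_comm]
  · exact zpowers_le.mpr (subset_closure ⟨c, mem_zpowers c, rfl⟩)

lemma mem_normalizer_zpowers_of_conj_eq_or_inv {g d : G}
    (h : g * d * g⁻¹ = d ∨ g * d * g⁻¹ = d⁻¹) :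
    g ∈ normalizer (zpowers d : Set G) := by
  rw [mem_normalizer_iff_map_conj_eq, MonoidHom.map_zpowers]
  rcases h with h | h <;> simp [MulAut.conj_apply, h, zpowers_inv]

lemma le_map_conj_inf_of_mem_normalizer {H C : Subgroup G} {g : G} (hHC : H ≤ C)
    (hg : g ∈ normalizer (H : Set G)) : H ≤ C.map (MulAut.conj g).toMonoidHom ⊓ C :=
  le_inf ((mem_normalizer_iff_map_conj_eq.mp hg).symm.le.trans (map_mono hHC)) hHC

lemma exists_conj_zpow_eq_zpow_of_infinite {g c : G}
    (hinf : (↑(map (MulAut.conj g).toMonoidHom (zpowers c) ⊓ zpowers c) : Set G).Infinite) :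
    ∃ m k : ℤ, m ≠ 0 ∧ g * c ^ m * g⁻¹ = c ^ k := by
  obtain ⟨x, ⟨hx_conj, hx_mem⟩, hx_ne⟩ := (hinf.sdiff (Set.finite_singleton 1)).nonempty
  obtain ⟨_, ⟨m, rfl⟩, rfl⟩ := mem_map.mp hx_conj
  obtain ⟨k, hk⟩ := mem_zpowers_iff.mp hx_mem
  refine ⟨m, k, ?_, hk.symm⟩
  rintro rfl
  simp at hx_ne

lemma mem_normalizer_zpowers_pow_factorial (hCC : ConditionC G) {g c : G}
    (hc : ∀ n : ℤ, n ≠ 0 → c ^ n ≠ 1) {m k : ℤ} (hm : m ≠ 0)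
    (hconj : g * c ^ m * g⁻¹ = c ^ k) :
    g ∈ normalizer (zpowers (c ^ m.natAbs.factorial) : Set G) := by
  have hk : k = m ∨ k = -m := abs_eq_abs.mp (hCC g c hc m k hconj).symm
  have hd : g * c ^ m * g⁻¹ = c ^ m ∨ g * c ^ m * g⁻¹ = (c ^ m)⁻¹ := by
    rcases hk with rfl | rfl
    · exact .inl hconj
    · exact .inr (by rw [hconj, zpow_neg])
  obtain ⟨t, ht⟩ : m ∣ (m.natAbs.factorial : ℤ) := Int.natAbs_dvd.mp <|
    Int.natCast_dvd_natCast.mpr (Nat.dvd_factorial (Int.natAbs_pos.mpr hm) le_rfl)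
  rw [← zpow_natCast, ht, zpow_mul]
  apply mem_normalizer_zpowers_of_conj_eq_or_inv
  rw [← conj_zpow, ← inv_zpow]
  rcases hd with hd | hd <;> rw [hd] <;> simp

end

theorem stmt14 {G : Type*} [Group G] (hCC : ConditionC G)
    (C : Subgroup G) (hC : IsInfiniteCyclic C) (g : G) :
    ((Subgroup.map (MulAut.conj g).toMonoidHom C ⊓ C : Subgroup G) : Set G).Infinite ↔
      ∃ k : ℕ, 1 ≤ k ∧ g ∈ Subgroup.normalizer (factPow C k : Set G) := by
  obtain ⟨c, hc, rfl⟩ := hC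
  constructor
  · intro hinf
    obtain ⟨m, k, hm, hconj⟩ := exists_conj_zpow_eq_zpow_of_infinite hinf
    refine ⟨m.natAbs, Int.natAbs_pos.mpr hm, ?_⟩
    rw [factPow_zpowers]
    exact mem_normalizer_zpowers_pow_factorial hCC hc hm hconj
  · rintro ⟨k, -, hg⟩
    rw [factPow_zpowers] at hg
    have hc_inf : ¬IsOfFinOrder c := fun h ↦
      let ⟨n, hn, hn1⟩ := isOfFinOrder_iff_zpow_eq_one.mp h
      hc n hn hn1
    have hd_inf : ¬IsOfFinOrder (c ^ k.factorial) := fun h ↦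
      hc_inf (h.of_pow k.factorial_ne_zero)
    exact (infinite_zpowers.mpr hd_inf).mono
      (le_map_conj_inf_of_mem_normalizer (zpowers_le.mpr (pow_mem (mem_zpowers c) _)) hg)
end
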